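/- arXiv:math/0702802 — 11 statements merged into one kernel-verified Lean document; each statement's English description precedes it below -/
import Mathlib

section
/- Let k₁, k₂, k₃ : G × G → ℂ be kernels and fix x, w ∈ G such that the function (y,z) ↦ k₁(x,y)·k₂(y,z)·k₃(z,w) is integrable on G × G with respect to μ × μ. Then ((k₁ ⋆ k₂) ⋆ k₃)(x,w) = ∫_G ∫_G φ(x y⁻¹, y z⁻¹, z w⁻¹) · φ(x y⁻¹, y w⁻¹, w) · φ(y z⁻¹, z w⁻¹, w) · k₁(x,y) · k₂(y,z) · k₃(z,w) dμ(y) dμ(z); that is, the triple twisted-kernel product ((k₁ ⋆ k₂) ⋆ k₃)(x,w) equals the associator-corrected product Φ(k₁ ⋆ (k₂ ⋆ k₃))(x,w). -/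
open MeasureTheory

/-- The twisted product of two kernels:
`(k₁ ⋆ k₂)(x,z) = ∫_G φ(x y⁻¹, y z⁻¹, z) k₁(x,y) k₂(y,z) dμ(y)`. -/
noncomputable def twistedKernelMul {G : Type*} [Group G] [MeasurableSpace G]
    (μ : Measure G) (φ : G → G → G → ℂ) (k₁ k₂ : G → G → ℂ) : G → G → ℂ :=
  fun x z => ∫ y, φ (x * y⁻¹) (y * z⁻¹) z * k₁ x y * k₂ y z ∂μ

/-! Both sides are iterated integrals with `z` outside, so no Fubini argument is needed: once
the outer twist `φ(x z⁻¹, z w⁻¹, w)` is pulled into the `y`-integral, the integrands agree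
pointwise by the pentagonal identity at `(x y⁻¹, y z⁻¹, z w⁻¹, w)`. -/

section

variable {G : Type*} [Group G]

theorem twistedKernelMul_twistedKernelMul_apply [MeasurableSpace G] (μ : Measure G)
    (φ : G → G → G → ℂ) (k₁ k₂ k₃ : G → G → ℂ) (x w : G) :
    twistedKernelMul μ φ (twistedKernelMul μ φ k₁ k₂) k₃ x w
      = ∫ z, ∫ y, φ (x * z⁻¹) (z * w⁻¹) w * φ (x * y⁻¹) (y * z⁻¹) z *
          k₁ x y * k₂ y z * k₃ z w ∂μ ∂μ := by
  refine integral_congr_ae (Filter.Eventually.of_forall fun z => ?_)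
  simp only [twistedKernelMul, ← integral_const_mul, ← integral_mul_const]
  congr 1 with y
  ring

theorem pentagon_apply_mul_inv {φ : G → G → G → ℂ}
    (hpent : ∀ x y z w, φ x y z * φ x (y * z) w * φ y z w
      = φ (x * y) z w * φ x y (z * w)) (x y z w : G) :
    φ (x * y⁻¹) (y * z⁻¹) (z * w⁻¹) * φ (x * y⁻¹) (y * w⁻¹) w * φ (y * z⁻¹) (z * w⁻¹) w
      = φ (x * z⁻¹) (z * w⁻¹) w * φ (x * y⁻¹) (y * z⁻¹) z := by
  simpa only [mul_assoc, inv_mul_cancel_left, inv_mul_cancel, mul_one]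
    using hpent (x * y⁻¹) (y * z⁻¹) (z * w⁻¹) w

end

theorem triple_twisted_kernel_product_general
    {G : Type*} [Group G] [MeasurableSpace G]
    (μ : Measure G)
    (φ : G → G → G → ℂ)
    (hpent : ∀ x y z w, φ x y z * φ x (y * z) w * φ y z w
      = φ (x * y) z w * φ x y (z * w))
    (k₁ k₂ k₃ : G → G → ℂ) (x w : G) :
    twistedKernelMul μ φ (twistedKernelMul μ φ k₁ k₂) k₃ x w
      = ∫ z, ∫ y, φ (x * y⁻¹) (y * z⁻¹) (z * w⁻¹) * φ (x * y⁻¹) (y * w⁻¹) w *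
          φ (y * z⁻¹) (z * w⁻¹) w * k₁ x y * k₂ y z * k₃ z w ∂μ ∂μ := by
  rw [twistedKernelMul_twistedKernelMul_apply]
  simp only [pentagon_apply_mul_inv hpent]

/-- Let `G` be a locally compact group with left Haar measure `μ` and let
`φ` be a unit-circle-valued function on `G³` satisfying the pentagonal identity.  If the
function `(y,z) ↦ k₁(x,y)·k₂(y,z)·k₃(z,w)` is integrable on `G × G`, then the triple twisted
kernel product `((k₁ ⋆ k₂) ⋆ k₃)(x,w)` equals the associator-corrected product
`Φ(k₁ ⋆ (k₂ ⋆ k₃))(x,w)`, i.e.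
`∫∫ φ(xy⁻¹,yz⁻¹,zw⁻¹) φ(xy⁻¹,yw⁻¹,w) φ(yz⁻¹,zw⁻¹,w) k₁(x,y) k₂(y,z) k₃(z,w) dμ(y) dμ(z)`. -/
theorem triple_twisted_kernel_product
    {G : Type*} [Group G] [TopologicalSpace G] [IsTopologicalGroup G]
    [LocallyCompactSpace G] [MeasurableSpace G] [BorelSpace G]
    (μ : Measure G) [μ.IsHaarMeasure]
    (φ : G → G → G → ℂ) (hφ : ∀ x y z, ‖φ x y z‖ = 1)
    (hpent : ∀ x y z w, φ x y z * φ x (y * z) w * φ y z w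
      = φ (x * y) z w * φ x y (z * w))
    (k₁ k₂ k₃ : G → G → ℂ) (x w : G)
    (hint : Integrable
      (fun p : G × G => k₁ x p.1 * k₂ p.1 p.2 * k₃ p.2 w) (μ.prod μ)) :
    twistedKernelMul μ φ (twistedKernelMul μ φ k₁ k₂) k₃ x w
      = ∫ z, ∫ y, φ (x * y⁻¹) (y * z⁻¹) (z * w⁻¹) * φ (x * y⁻¹) (y * w⁻¹) w *
          φ (y * z⁻¹) (z * w⁻¹) w * k₁ x y * k₂ y z * k₃ z w ∂μ ∂μ :=
  triple_twisted_kernel_product_general μ φ hpent k₁ k₂ k₃ x w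
end

section
/- Suppose v : G × G → unitary elements of A satisfies β_x ∘ β_y = Ad(v(x,y)) ∘ β_{xy} for all x, y ∈ G, where β_x := Ad(w_x) ∘ α_x. Then for all x, y ∈ G there exists a unitary c(x,y) lying in the center of A such that v(x,y) = c(x,y) * w_x * α_x(w_y) * u(x,y) * (w_{xy})*. Conversely, for any map c : G × G → central unitary elements of A, the map v defined by v(x,y) := c(x,y) * w_x * α_x(w_y) * u(x,y) * (w_{xy})* satisfies β_x ∘ β_y = Ad(v(x,y)) ∘ β_{xy} for all x, y ∈ G. -/
/-- Let `A` be a unital C*-algebra, `G` a group, `α : G → Aut(A)` with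
`α_x ∘ α_y = Ad(u(x,y)) ∘ α_{xy}` for unitaries `u(x,y)`, `w : G → U(A)` arbitrary, and
`β_x := Ad(w_x) ∘ α_x`.  If `v : G × G → U(A)` satisfies `β_x ∘ β_y = Ad(v(x,y)) ∘ β_{xy}`,
then `v(x,y) = c(x,y) w_x α_x(w_y) u(x,y) w_{xy}*` for some central unitary `c(x,y)`;
conversely, for any central-unitary-valued `c` this formula for `v` satisfies
`β_x ∘ β_y = Ad(v(x,y)) ∘ β_{xy}`. -/
theorem exterior_equivalence_cocycle_form
    {A : Type*} [NormedRing A] [StarRing A] [CStarRing A] [NormedAlgebra ℂ A]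
    [CompleteSpace A] [StarModule ℂ A]
    {G : Type*} [Group G]
    (α : G → (A ≃⋆ₐ[ℂ] A)) (u : G → G → unitary A)
    (hu : ∀ x y (a : A), α x (α y a) = (u x y : A) * α (x * y) a * star ((u x y : A)))
    (w : G → unitary A)
    (β : G → A → A)
    (hβ : ∀ x (a : A), β x a = (w x : A) * α x a * star ((w x : A))) :
    (∀ v : G → G → unitary A,
      (∀ x y (a : A), β x (β y a) = (v x y : A) * β (x * y) a * star ((v x y : A))) →
      ∀ x y, ∃ c : unitary A, (∀ a : A, (c : A) * a = a * (c : A)) ∧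
        (v x y : A)
          = (c : A) * (w x : A) * α x ((w y : A)) * (u x y : A) * star ((w (x * y) : A)))
    ∧
    (∀ c : G → G → unitary A, (∀ x y (a : A), (c x y : A) * a = a * (c x y : A)) →
      ∀ x y (a : A), β x (β y a)
        = ((c x y : A) * (w x : A) * α x ((w y : A)) * (u x y : A) * star ((w (x * y) : A)))
            * β (x * y) a
            * star ((c x y : A) * (w x : A) * α x ((w y : A)) * (u x y : A)
                * star ((w (x * y) : A)))) := by
  have hss : ∀ z : unitary A, star (z : A) * (z : A) = 1 := fun z =>
    Unitary.star_mul_self_of_mem z.2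
  have hms : ∀ z : unitary A, (z : A) * star (z : A) = 1 := fun z =>
    Unitary.mul_star_self_of_mem z.2
  have hcan1 : ∀ (z : unitary A) (t : A), star (z : A) * ((z : A) * t) = t := by
    intro z t; rw [← mul_assoc, hss, one_mul]
  have hcan2 : ∀ (z : unitary A) (t : A), (z : A) * (star (z : A) * t) = t := by
    intro z t; rw [← mul_assoc, hms, one_mul]
  have hAss : ∀ (x y : G), star (α x ((w y : A))) * α x ((w y : A)) = 1 := by
    intro x y; rw [← map_star, ← map_mul, hss, map_one]
  have hAms : ∀ (x y : G), α x ((w y : A)) * star (α x ((w y : A))) = 1 := by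
    intro x y; rw [← map_star, ← map_mul, hms, map_one]
  have hAcan1 : ∀ (x y : G) (t : A), star (α x ((w y : A))) * (α x ((w y : A)) * t) = t := by
    intro x y t; rw [← mul_assoc, hAss, one_mul]
  have hAcan2 : ∀ (x y : G) (t : A), α x ((w y : A)) * (star (α x ((w y : A))) * t) = t := by
    intro x y t; rw [← mul_assoc, hAms, one_mul]
  have key : ∀ x y (a : A), β x (β y a)
      = ((w x : A) * α x ((w y : A)) * (u x y : A) * star ((w (x * y) : A)))
        * β (x * y) a
        * star ((w x : A) * α x ((w y : A)) * (u x y : A) * star ((w (x * y) : A))) := by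
    intro x y a
    simp only [hβ, map_mul, map_star, hu, star_mul, star_star, mul_assoc, hcan1, hcan2]
  have hmem : ∀ x y, ((w x : A) * α x ((w y : A)) * (u x y : A) * star ((w (x * y) : A)))
      ∈ unitary A := by
    intro x y
    have hα : α x ((w y : A)) ∈ unitary A := Unitary.mem_iff.mpr ⟨hAss x y, hAms x y⟩
    exact mul_mem (mul_mem (mul_mem (w x).2 hα) (u x y).2) (Unitary.star_mem (w (x * y)).2)
  have hsurj : ∀ z (b : A), ∃ a : A, β z a = b := by
    intro z b
    refine ⟨(α z).symm (star ((w z : A)) * b * (w z : A)), ?_⟩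
    rw [hβ, StarAlgEquiv.apply_symm_apply]
    simp only [mul_assoc, hcan1, hcan2]
    rw [Unitary.mul_star_self_of_mem (w z).2, mul_one]
  constructor
  · intro v hv x y
    set vt : unitary A := ⟨_, hmem x y⟩ with hvt
    have hvtc : (vt : A) = (w x : A) * α x ((w y : A)) * (u x y : A) * star ((w (x * y) : A)) :=
      rfl
    have hcent : ∀ b : A, (star (vt : A) * (v x y : A)) * b = b * (star (vt : A) * (v x y : A)) := by
      intro b
      obtain ⟨a, ha⟩ := hsurj (x * y) b
      have h1 : (v x y : A) * b * star ((v x y : A)) = (vt : A) * b * star ((vt : A)) := by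
        rw [← ha, ← hv x y a, key x y a, hvtc]
      have h2 := congrArg (fun t => star ((vt : A)) * t * (v x y : A)) h1
      simp only [hvtc, mul_assoc, star_mul, star_star, hcan1, hcan2, hAcan1, hAcan2,
        hss, hms, mul_one] at h2
      simpa [hvtc, mul_assoc, star_mul, star_star] using h2
    refine ⟨star vt * v x y, ?_, ?_⟩
    · intro b
      simpa [mul_assoc] using hcent b
    · have h3 : (v x y : A) = (vt : A) * (star (vt : A) * (v x y : A)) := (hcan2 vt _).symm
      rw [h3, ← hcent ((vt : A))]
      simp [hvtc, mul_assoc]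
  · intro c hc x y a
    have h3 : ∀ X : A, (c x y : A) * X * star ((c x y : A)) = X := by
      intro X
      rw [hc x y X, mul_assoc, hms, mul_one]
    rw [key x y a,
      ← h3 (((w x : A) * α x ((w y : A)) * (u x y : A) * star ((w (x * y) : A)))
        * β (x * y) a
        * star ((w x : A) * α x ((w y : A)) * (u x y : A) * star ((w (x * y) : A))))]
    simp only [star_mul, star_star, mul_assoc]
end

section
/- Suppose in addition that u satisfies the deformed cocycle condition u(x,y) * u(xy,z) = φ(x,y,z) • (α_x(u(y,z)) * u(x,yz)) for all x,y,z ∈ G, where φ : G × G × G → ℂ is a nowhere-zero scalar-valued function, and let c : G × G → ℂ be a nowhere-zero scalar-valued function. Define v(x,y) := c(x,y) • (w_x * α_x(w_y) * u(x,y) * (w_{xy})*) and β_x := Ad(w_x) ∘ α_x. Then v satisfies v(x,y) * v(xy,z) = (φ(x,y,z) · (dc)(x,y,z)) • (β_x(v(y,z)) * v(x,yz)) for all x,y,z ∈ G, where (dc)(x,y,z) = c(x,y) c(xy,z) c(x,yz)⁻¹ c(y,z)⁻¹. In particular, different liftings of an outer action give cohomologous obstruction three-cocycles φ and φ·dc.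 -/
/-- With `α, u, w` as before, suppose `u` satisfies the deformed cocycle
condition `u(x,y) u(xy,z) = φ(x,y,z) • (α_x(u(y,z)) u(x,yz))` for a nowhere-zero scalar
function `φ`.  For a nowhere-zero scalar function `c` set
`v(x,y) := c(x,y) • (w_x α_x(w_y) u(x,y) w_{xy}*)` and `β_x := Ad(w_x) ∘ α_x`.  Then
`v(x,y) v(xy,z) = (φ(x,y,z)·(dc)(x,y,z)) • (β_x(v(y,z)) v(x,yz))` where
`(dc)(x,y,z) = c(x,y) c(xy,z) c(x,yz)⁻¹ c(y,z)⁻¹`: different liftings give cohomologous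
obstruction cocycles. -/
theorem liftings_give_cohomologous_cocycles
    {A : Type*} [NormedRing A] [StarRing A] [CStarRing A] [NormedAlgebra ℂ A]
    [CompleteSpace A] [StarModule ℂ A]
    {G : Type*} [Group G]
    (α : G → (A ≃⋆ₐ[ℂ] A)) (u : G → G → unitary A)
    (hu : ∀ x y (a : A), α x (α y a) = (u x y : A) * α (x * y) a * star ((u x y : A)))
    (φ : G → G → G → ℂ) (hφ : ∀ x y z, φ x y z ≠ 0)
    (hcoc : ∀ x y z, (u x y : A) * (u (x * y) z : A)
      = φ x y z • (α x ((u y z : A)) * (u x (y * z) : A)))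
    (c : G → G → ℂ) (hc : ∀ x y, c x y ≠ 0)
    (w : G → unitary A)
    (v : G → G → A)
    (hv : ∀ x y, v x y
      = c x y • ((w x : A) * α x ((w y : A)) * (u x y : A) * star ((w (x * y) : A))))
    (β : G → A → A)
    (hβ : ∀ x (a : A), β x a = (w x : A) * α x a * star ((w x : A))) :
    ∀ x y z, v x y * v (x * y) z
      = (φ x y z * (c x y * c (x * y) z * (c x (y * z))⁻¹ * (c y z)⁻¹)) •
          (β x (v y z) * v x (y * z)) := by
  intro x y z
  have cancel1 : ∀ (g : G) (a : A), star (w g : A) * ((w g : A) * a) = a := by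
    intro g a
    rw [← mul_assoc, Unitary.coe_star_mul_self, one_mul]
  have cancel2 : ∀ (g : G) (a : A), (w g : A) * (star (w g : A) * a) = a := by
    intro g a
    rw [← mul_assoc, Unitary.mul_star_self_of_mem (w g).prop, one_mul]
  have cancelu : ∀ (g h : G) (b : A),
      star (u g h : A) * ((u g h : A) * b) = b := by
    intro g h b
    rw [← mul_assoc, Unitary.coe_star_mul_self, one_mul]
  -- key commutation: u(x,y) * α_{xy}(a) * b = α_x(α_y a) * u(x,y) * b
  have key : ∀ (a b : A), (u x y : A) * (α (x * y) a * b)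
      = α x (α y a) * ((u x y : A) * b) := by
    intro a b
    rw [hu, mul_assoc ((u x y : A) * α (x * y) a), cancelu, mul_assoc]
  have hcoc' : ∀ (b : A), (u x y : A) * ((u (x * y) z : A) * b)
      = φ x y z • (α x (u y z : A) * ((u x (y * z) : A) * b)) := by
    intro b
    rw [← mul_assoc, hcoc, smul_mul_assoc, mul_assoc]
  -- expand everything
  rw [hv x y, hv (x * y) z, hv y z, hv x (y * z), hβ]
  simp only [smul_mul_assoc, mul_smul_comm, map_smul, smul_smul, mul_assoc]
  rw [cancel1 (x * y), key, hcoc', ← mul_assoc x y z]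
  simp only [map_mul, mul_assoc, smul_smul, mul_smul_comm, smul_mul_assoc]
  rw [cancel1 x]
  rw [show ∀ b : A, α x (star (w (y * z) : A)) * (α x (w (y * z) : A) * b) = b by
    intro b
    rw [← mul_assoc, ← map_mul, Unitary.coe_star_mul_self, map_one, one_mul]]
  congr 1
  have h1 : (c x (y * z))⁻¹ * ((c y z)⁻¹ * (c x (y * z) * c y z)) = 1 := by
    field_simp [hc x (y * z), hc y z]
  rw [h1, mul_one]
  ring
end

section
/- Define the twisted convolutions (f ⋆_{α,u} g)(x) = ∫_G f(y) * α_y(g(y⁻¹x)) * u(y, y⁻¹x) dμ(y) and (f ⋆_{β,v} g)(x) = ∫_G f(y) * β_y(g(y⁻¹x)) * v(y, y⁻¹x) dμ(y) (Bochner integrals in A), and for f : G → A set f_w(x) := f(x) * w_x. If for a given x ∈ G the integrand y ↦ f(y) * β_y(g(y⁻¹x)) * v(y, y⁻¹x) is Bochner integrable, then (f ⋆_{β,v} g)_w(x) = (f_w ⋆_{α,u} g_w)(x). Hence the map f ↦ f_w intertwines the two twisted convolution products, so the twisted crossed products A⋊_{α,u}G and A⋊_{β,v}G defined by exterior equivalent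 twisted actions are isomorphic. -/
/-!
With `z = y⁻¹x`, multiplicativity of `α_y` and unitarity of `w` give the pointwise identity
`f(y) β_y(g(z)) v(y,z) w_x = f(y) w_y α_y(g(z) w_z) u(y,z)`. Right multiplication by the unit
`w_x` is a continuous linear automorphism of `A`, so it commutes with the Bochner integral.
-/

open MeasureTheory

theorem integral_mul_of_isUnit {X A : Type*} (𝕜 : Type*) [MeasurableSpace X] {μ : Measure X}
    [RCLike 𝕜] [NormedRing A] [NormedAlgebra 𝕜 A] [NormedSpace ℝ A] (f : X → A) {a : A}
    (ha : IsUnit a) : ∫ x, f x * a ∂μ = (∫ x, f x ∂μ) * a := by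
  obtain ⟨a, rfl⟩ := ha
  exact (ContinuousLinearEquiv.smulLeft (R₁ := 𝕜) (Units.opEquiv.symm (.op a))).integral_comp_comm
    f

theorem mul_conj_apply_mul_exteriorCocycle {A F : Type*} [Monoid A] [StarMul A] [FunLike F A A]
    [MulHomClass F A A] (φ : F) (a b c : A) (w₁ w₂ w₃ : unitary A) :
    a * ((w₁ : A) * φ b * star (w₁ : A)) * ((w₁ : A) * φ w₂ * c * star (w₃ : A)) * w₃
      = a * w₁ * φ (b * w₂) * c := by
  simp only [map_mul, mul_assoc, Unitary.coe_star_mul_self, mul_one]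
  rw [← mul_assoc (star (w₁ : A)), Unitary.coe_star_mul_self, one_mul]

theorem exterior_equivalent_twisted_convolutions_general
    {G : Type*} [Group G] [MeasurableSpace G]
    (μ : Measure G)
    {A : Type*} [NormedRing A] [StarRing A] [NormedAlgebra ℂ A]
    (α : G → (A ≃⋆ₐ[ℂ] A)) (u : G → G → unitary A)
    (w : G → unitary A)
    (β : G → A → A)
    (hβ : ∀ x (a : A), β x a = (w x : A) * α x a * star ((w x : A)))
    (v : G → G → A)
    (hv : ∀ x y, v x y
      = (w x : A) * α x ((w y : A)) * (u x y : A) * star ((w (x * y) : A)))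
    (f g : G → A) (x : G) :
    (∫ y, f y * β y (g (y⁻¹ * x)) * v y (y⁻¹ * x) ∂μ) * (w x : A)
      = ∫ y, (f y * (w y : A)) * α y (g (y⁻¹ * x) * (w (y⁻¹ * x) : A))
          * (u y (y⁻¹ * x) : A) ∂μ := by
  rw [← integral_mul_of_isUnit ℂ _ Unitary.isUnit_coe]
  congr 1 with y
  rw [hβ, hv, mul_inv_cancel_left]
  exact mul_conj_apply_mul_exteriorCocycle (α y) _ _ _ _ _ _

/-- Let `G` be a locally compact group with left Haar measure `μ`, `A` a
unital C*-algebra, `(α, u)` a twisted action, `w : G → U(A)`, `β_x := Ad(w_x) ∘ α_x` and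
`v(x,y) := w_x α_x(w_y) u(x,y) w_{xy}*`.  If for a given `x` the integrand
`y ↦ f(y) β_y(g(y⁻¹x)) v(y,y⁻¹x)` is Bochner integrable, then
`(f ⋆_{β,v} g)_w(x) = (f_w ⋆_{α,u} g_w)(x)` where `f_w(x) = f(x) w_x`; hence `f ↦ f_w`
intertwines the two twisted convolutions, so exterior equivalent twisted actions have
isomorphic twisted crossed products. -/
theorem exterior_equivalent_twisted_convolutions
    {G : Type*} [Group G] [TopologicalSpace G] [IsTopologicalGroup G]
    [LocallyCompactSpace G] [MeasurableSpace G] [BorelSpace G]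
    (μ : Measure G) [μ.IsHaarMeasure]
    {A : Type*} [NormedRing A] [StarRing A] [CStarRing A] [NormedAlgebra ℂ A]
    [CompleteSpace A] [StarModule ℂ A]
    (α : G → (A ≃⋆ₐ[ℂ] A)) (u : G → G → unitary A)
    (hu : ∀ x y (a : A), α x (α y a) = (u x y : A) * α (x * y) a * star ((u x y : A)))
    (w : G → unitary A)
    (β : G → A → A)
    (hβ : ∀ x (a : A), β x a = (w x : A) * α x a * star ((w x : A)))
    (v : G → G → A)
    (hv : ∀ x y, v x y
      = (w x : A) * α x ((w y : A)) * (u x y : A) * star ((w (x * y) : A)))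
    (f g : G → A) (x : G)
    (hint : Integrable (fun y => f y * β y (g (y⁻¹ * x)) * v y (y⁻¹ * x)) μ) :
    (∫ y, f y * β y (g (y⁻¹ * x)) * v y (y⁻¹ * x) ∂μ) * (w x : A)
      = ∫ y, (f y * (w y : A)) * α y (g (y⁻¹ * x) * (w (y⁻¹ * x) : A))
          * (u y (y⁻¹ * x) : A) ∂μ :=
  exterior_equivalent_twisted_convolutions_general μ α u w β hβ v hv f g x
end

section
/- For all x, y ∈ G₁ and X, Y ∈ G₂: β_x ∘ β_X ∘ β_y ∘ β_Y = Ad( β_x(ṽ(X,y)) ) ∘ β_{xy} ∘ β_{XY}. Equivalently, setting β̂_{xX} := β_x ∘ β_X and v̂(xX, yY) := β_x(ṽ(X,y)), the pair (β̂, v̂) satisfies β̂_{xX} ∘ β̂_{yY} = Ad(v̂(xX,yY)) ∘ β̂_{(xy)(XY)}, so (β, v) is exterior equivalent to (β̂, v̂). -/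
/-!
Since `v(ξ,η)` and `v(η,ξ)` both implement `β_ξ β_η` and `β_η β_ξ` up to the same automorphism
`β_{ξη} = β_{ηξ}`, the two composites differ by conjugation with `ṽ(ξ,η)`. Moving `β_X` past `β_y`
this way, and then merging `β_x β_y` and `β_X β_Y`, on which `v` is trivial, gives the formula.
-/

def IsTwistedAction {R A G : Type*} [Semiring A] [StarMul A] [SMul R A] [Mul G]
    (β : G → A ≃⋆ₐ[R] A) (v : G → G → unitary A) : Prop :=
  ∀ ξ η (a : A), β ξ (β η a) = (v ξ η : A) * β (ξ * η) a * star (v ξ η : A)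

namespace IsTwistedAction

variable {R A G : Type*} [Semiring A] [StarMul A] [SMul R A]
  {β : G → A ≃⋆ₐ[R] A} {v : G → G → unitary A}

theorem apply_apply_of_eq_one [Mul G] (hβ : IsTwistedAction β v) {ξ η : G} (hv : v ξ η = 1)
    (a : A) : β ξ (β η a) = β (ξ * η) a := by
  simpa [hv] using hβ ξ η a

theorem apply_apply_comm [CommMonoid G] (hβ : IsTwistedAction β v) (ξ η : G) (a : A) :
    β ξ (β η a) = ((v ξ η : A) * star (v η ξ : A)) * β η (β ξ a)
      * star ((v ξ η : A) * star (v η ξ : A)) := by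
  have hηξ : β (ξ * η) a = star (v η ξ : A) * β η (β ξ a) * (v η ξ : A) := by
    rw [hβ η ξ, mul_comm η ξ]
    simp only [← mul_assoc, Unitary.coe_star_mul_self, one_mul]
    simp only [mul_assoc, Unitary.coe_star_mul_self, mul_one]
  rw [hβ ξ η, hηξ]
  simp only [star_mul, star_star, mul_assoc]

end IsTwistedAction

theorem beta_hat_exterior_equivalent_general
    {A : Type*} [NormedRing A] [StarRing A] [NormedAlgebra ℂ A]
    {G₁ G₂ : Type*} [CommGroup G₁] [CommGroup G₂]
    (β : G₁ × G₂ → (A ≃⋆ₐ[ℂ] A)) (v : G₁ × G₂ → G₁ × G₂ → unitary A)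
    (htw : ∀ ξ η (a : A), β ξ (β η a) = (v ξ η : A) * β (ξ * η) a * star ((v ξ η : A)))
    (hv₁ : ∀ x y : G₁, v (x, 1) (y, 1) = 1)
    (hv₂ : ∀ X Y : G₂, v ((1 : G₁), X) (1, Y) = 1)
    (vt : G₁ × G₂ → G₁ × G₂ → A)
    (hvt : ∀ ξ η, vt ξ η = (v ξ η : A) * star ((v η ξ : A))) :
    ∀ (x y : G₁) (X Y : G₂) (a : A),
      β (x, 1) (β (1, X) (β (y, 1) (β (1, Y) a)))
        = β (x, 1) (vt (1, X) (y, 1)) * β (x * y, 1) (β (1, X * Y) a)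
            * star (β (x, 1) (vt (1, X) (y, 1))) := by
  intro x y X Y a
  have hβ : IsTwistedAction β v := htw
  have hxy (b : A) : β (x, 1) (β (y, 1) b) = β (x * y, 1) b := by
    simpa using hβ.apply_apply_of_eq_one (hv₁ x y) b
  have hXY : β (1, X) (β (1, Y) a) = β (1, X * Y) a := by
    simpa using hβ.apply_apply_of_eq_one (hv₂ X Y) a
  rw [hβ.apply_apply_comm (1, X) (y, 1), hXY, map_mul, map_mul, map_star, hxy, hvt]

/-- **setting of Theorem 8.1.**  `G = G₁ × G₂` abelian, `(β, v)` a twisted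
action on the unital C*-algebra `A` with deformed cocycle condition governed by an
antisymmetric tricharacter `φ`, with `v` trivial on each subgroup and `φ` trivial whenever
two arguments lie in `G₂` or all three lie in `G₁`; `ṽ(ξ,η) := v(ξ,η) (v(η,ξ))*`.  Then for
`x, y ∈ G₁`, `X, Y ∈ G₂`:
`β_x ∘ β_X ∘ β_y ∘ β_Y = Ad(β_x(ṽ(X,y))) ∘ β_{xy} ∘ β_{XY}`, i.e. `(β, v)` is exterior
equivalent to `(β̂, v̂)` where `β̂_{xX} = β_x ∘ β_X` and `v̂(xX,yY) = β_x(ṽ(X,y))`. -/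
theorem beta_hat_exterior_equivalent
    {A : Type*} [NormedRing A] [StarRing A] [CStarRing A] [NormedAlgebra ℂ A]
    [CompleteSpace A] [StarModule ℂ A]
    {G₁ G₂ : Type*} [CommGroup G₁] [CommGroup G₂]
    (β : G₁ × G₂ → (A ≃⋆ₐ[ℂ] A)) (v : G₁ × G₂ → G₁ × G₂ → unitary A)
    (htw : ∀ ξ η (a : A), β ξ (β η a) = (v ξ η : A) * β (ξ * η) a * star ((v ξ η : A)))
    (φ : G₁ × G₂ → G₁ × G₂ → G₁ × G₂ → ℂ)
    (hφabs : ∀ ξ η ζ, ‖φ ξ η ζ‖ = 1)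
    (hmul₁ : ∀ ξ ξ' η ζ, φ (ξ * ξ') η ζ = φ ξ η ζ * φ ξ' η ζ)
    (hmul₂ : ∀ ξ η η' ζ, φ ξ (η * η') ζ = φ ξ η ζ * φ ξ η' ζ)
    (hmul₃ : ∀ ξ η ζ ζ', φ ξ η (ζ * ζ') = φ ξ η ζ * φ ξ η ζ')
    (hswap₁₂ : ∀ ξ η ζ, φ η ξ ζ = (φ ξ η ζ)⁻¹)
    (hswap₂₃ : ∀ ξ η ζ, φ ξ ζ η = (φ ξ η ζ)⁻¹)
    (hcoc : ∀ ξ η ζ, (v ξ η : A) * (v (ξ * η) ζ : A)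
      = φ ξ η ζ • (β ξ ((v η ζ : A)) * (v ξ (η * ζ) : A)))
    (hv₁ : ∀ x y : G₁, v (x, 1) (y, 1) = 1)
    (hv₂ : ∀ X Y : G₂, v ((1 : G₁), X) (1, Y) = 1)
    (hφG₁ : ∀ x y z : G₁, φ (x, 1) (y, 1) (z, 1) = 1)
    (hφG₂ : ∀ (ξ : G₁ × G₂) (X Y : G₂),
      φ ξ ((1 : G₁), X) (1, Y) = 1 ∧ φ ((1 : G₁), X) ξ (1, Y) = 1 ∧
        φ ((1 : G₁), X) ((1 : G₁), Y) ξ = 1)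
    (vt : G₁ × G₂ → G₁ × G₂ → A)
    (hvt : ∀ ξ η, vt ξ η = (v ξ η : A) * star ((v η ξ : A))) :
    ∀ (x y : G₁) (X Y : G₂) (a : A),
      β (x, 1) (β (1, X) (β (y, 1) (β (1, Y) a)))
        = β (x, 1) (vt (1, X) (y, 1)) * β (x * y, 1) (β (1, X * Y) a)
            * star (β (x, 1) (vt (1, X) (y, 1))) :=
  beta_hat_exterior_equivalent_general β v htw hv₁ hv₂ vt hvt
end

section
/- For all X, Y ∈ G₂ and z ∈ G₁: ṽ(XY, z) = β_X( ṽ(Y,z) ) * ṽ(X,z). -/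
/-! Put `a = X`, `b = Y`, `c = z`. Since `v(a, b) = 1` and `φ` is trivial on the triples
`(a, b, c)`, `(c, a, b)`, `(a, c, b)`, the three cocycle identities read
`v(ab, c) = β_a(v(b, c)) v(a, bc)`, `v(c, ab) = v(c, a) v(ca, b)` and
`v(a, c) v(ac, b) = β_a(v(c, b)) v(a, cb)`. Eliminating `v(ca, b)` between the last two and
using that `v(a, bc)` is unitary turns `v(ab, c) v(c, ab)*` into `β_a(ṽ(b, c)) ṽ(a, c)`. -/

theorem cocycle_mul_star_swap_mul_left {G A F : Type*} [CommMonoid G] [Monoid A] [StarMul A]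
    [FunLike F A A] [MonoidHomClass F A A] [StarHomClass F A A]
    (β : G → F) (v : G → G → unitary A) {a b c : G} (hab : v a b = 1)
    (habc : (v a b : A) * v (a * b) c = β a (v b c) * v a (b * c))
    (hcab : (v c a : A) * v (c * a) b = β c (v a b) * v c (a * b))
    (hacb : (v a c : A) * v (a * c) b = β a (v c b) * v a (c * b)) :
    (v (a * b) c : A) * star (v c (a * b) : A)
      = β a ((v b c : A) * star (v c b : A)) * ((v a c : A) * star (v c a : A)) := by
  rw [hab, OneMemClass.coe_one, one_mul] at habc
  rw [hab, OneMemClass.coe_one, map_one, one_mul] at hcab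
  have hcab' : (v (c * a) b : A) = star (v a c : A) * (β a (v c b) * v a (b * c)) := by
    rw [mul_comm c a, mul_comm b c, ← hacb, ← mul_assoc, Unitary.coe_star_mul_self, one_mul]
  rw [← hcab, habc, hcab', map_mul, map_star, star_mul, star_mul, star_mul, star_star]
  calc β a (v b c : A) * v a (b * c)
        * ((star (v a (b * c) : A) * star (β a (v c b : A)) * v a c) * star (v c a : A))
      = β a (v b c : A) * ((v a (b * c) : A) * star (v a (b * c) : A))
        * star (β a (v c b : A)) * ((v a c : A) * star (v c a : A)) := by noncomm_ring
    _ = β a (v b c : A) * star (β a (v c b : A)) * ((v a c : A) * star (v c a : A)) := by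
      rw [Unitary.mul_star_self_of_mem (v a (b * c)).2, mul_one]

theorem vt_multiplicative_in_first_argument_general
    {A : Type*} [NormedRing A] [StarRing A] [NormedAlgebra ℂ A]
    {G₁ G₂ : Type*} [CommGroup G₁] [CommGroup G₂]
    (β : G₁ × G₂ → (A ≃⋆ₐ[ℂ] A)) (v : G₁ × G₂ → G₁ × G₂ → unitary A)
    (φ : G₁ × G₂ → G₁ × G₂ → G₁ × G₂ → ℂ)
    (hcoc : ∀ ξ η ζ, (v ξ η : A) * (v (ξ * η) ζ : A)
      = φ ξ η ζ • (β ξ ((v η ζ : A)) * (v ξ (η * ζ) : A)))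
    (hv₂ : ∀ X Y : G₂, v ((1 : G₁), X) (1, Y) = 1)
    (hφG₂ : ∀ (ξ : G₁ × G₂) (X Y : G₂),
      φ ξ ((1 : G₁), X) (1, Y) = 1 ∧ φ ((1 : G₁), X) ξ (1, Y) = 1 ∧
        φ ((1 : G₁), X) ((1 : G₁), Y) ξ = 1)
    (vt : G₁ × G₂ → G₁ × G₂ → A)
    (hvt : ∀ ξ η, vt ξ η = (v ξ η : A) * star ((v η ξ : A))) :
    ∀ (X Y : G₂) (z : G₁),
      vt ((1 : G₁), X * Y) (z, 1)
        = β ((1 : G₁), X) (vt ((1 : G₁), Y) (z, 1)) * vt ((1 : G₁), X) (z, 1) := by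
  intro X Y z
  obtain ⟨hφcab, hφacb, hφabc⟩ := hφG₂ (z, 1) X Y
  have key := cocycle_mul_star_swap_mul_left β v (hv₂ X Y)
    (by rw [hcoc, hφabc, one_smul]) (by rw [hcoc, hφcab, one_smul])
    (by rw [hcoc, hφacb, one_smul])
  rw [hvt, hvt, hvt, ← key, Prod.mk_mul_mk, one_mul]

/-- **setting of Theorem 8.1.**  With `(β, v, φ, ṽ)` as in Theorem 8.1, for
all `X, Y ∈ G₂` and `z ∈ G₁`: `ṽ(XY, z) = β_X(ṽ(Y,z)) * ṽ(X,z)`. -/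
theorem vt_multiplicative_in_first_argument
    {A : Type*} [NormedRing A] [StarRing A] [CStarRing A] [NormedAlgebra ℂ A]
    [CompleteSpace A] [StarModule ℂ A]
    {G₁ G₂ : Type*} [CommGroup G₁] [CommGroup G₂]
    (β : G₁ × G₂ → (A ≃⋆ₐ[ℂ] A)) (v : G₁ × G₂ → G₁ × G₂ → unitary A)
    (htw : ∀ ξ η (a : A), β ξ (β η a) = (v ξ η : A) * β (ξ * η) a * star ((v ξ η : A)))
    (φ : G₁ × G₂ → G₁ × G₂ → G₁ × G₂ → ℂ)
    (hφabs : ∀ ξ η ζ, ‖φ ξ η ζ‖ = 1)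
    (hmul₁ : ∀ ξ ξ' η ζ, φ (ξ * ξ') η ζ = φ ξ η ζ * φ ξ' η ζ)
    (hmul₂ : ∀ ξ η η' ζ, φ ξ (η * η') ζ = φ ξ η ζ * φ ξ η' ζ)
    (hmul₃ : ∀ ξ η ζ ζ', φ ξ η (ζ * ζ') = φ ξ η ζ * φ ξ η ζ')
    (hswap₁₂ : ∀ ξ η ζ, φ η ξ ζ = (φ ξ η ζ)⁻¹)
    (hswap₂₃ : ∀ ξ η ζ, φ ξ ζ η = (φ ξ η ζ)⁻¹)
    (hcoc : ∀ ξ η ζ, (v ξ η : A) * (v (ξ * η) ζ : A)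
      = φ ξ η ζ • (β ξ ((v η ζ : A)) * (v ξ (η * ζ) : A)))
    (hv₁ : ∀ x y : G₁, v (x, 1) (y, 1) = 1)
    (hv₂ : ∀ X Y : G₂, v ((1 : G₁), X) (1, Y) = 1)
    (hφG₁ : ∀ x y z : G₁, φ (x, 1) (y, 1) (z, 1) = 1)
    (hφG₂ : ∀ (ξ : G₁ × G₂) (X Y : G₂),
      φ ξ ((1 : G₁), X) (1, Y) = 1 ∧ φ ((1 : G₁), X) ξ (1, Y) = 1 ∧
        φ ((1 : G₁), X) ((1 : G₁), Y) ξ = 1)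
    (vt : G₁ × G₂ → G₁ × G₂ → A)
    (hvt : ∀ ξ η, vt ξ η = (v ξ η : A) * star ((v η ξ : A))) :
    ∀ (X Y : G₂) (z : G₁),
      vt ((1 : G₁), X * Y) (z, 1)
        = β ((1 : G₁), X) (vt ((1 : G₁), Y) (z, 1)) * vt ((1 : G₁), X) (z, 1) :=
  vt_multiplicative_in_first_argument_general β v φ hcoc hv₂ hφG₂ vt hvt
end

section
/- For all X ∈ G₂ and y, z ∈ G₁: ṽ(X, yz) = φ(X,y,z)⁻³ • ( ṽ(X,y) * β_y( ṽ(X,z) ) ). -/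
/-!
Only the deformed cocycle identities at `(X,y,z)`, `(y,X,z)` and `(y,z,X)` enter. Since
`v(y,z) = 1`, the first and the last express `v(X,yz)` and `v(yz,X)` through `v(X,y) v(Xy,z)` and
`β_y(v(z,X)) v(y,Xz)`, and the middle one turns `v(yX,z) v(y,Xz)*` into `v(y,X)* β_y(v(X,z))`.
Hence `ṽ(X,yz) = φ(X,y,z)⁻¹ conj φ(y,z,X) φ(y,X,z) • ṽ(X,y) β_y(ṽ(X,z))` for a twisted action of
any group in which `X` commutes with `y` and `z`; for an antisymmetric unimodular `φ` each of the
three scalars is `φ(X,y,z)⁻¹`.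
-/

section

variable {A : Type*} [Ring A] [StarRing A] [Algebra ℂ A] {G : Type*} [Group G]

def IsDeformedCocycle (β : G → A ≃⋆ₐ[ℂ] A) (v : G → G → unitary A) (φ : G → G → G → ℂ) :
    Prop :=
  ∀ ξ η ζ, (v ξ η : A) * v (ξ * η) ζ = φ ξ η ζ • (β ξ (v η ζ) * v ξ (η * ζ))

def twistCommutator (v : G → G → unitary A) (ξ η : G) : A :=
  v ξ η * star (v η ξ : A)

namespace IsDeformedCocycle

variable {β : G → A ≃⋆ₐ[ℂ] A} {v : G → G → unitary A} {φ : G → G → G → ℂ}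

theorem coe_mul_star_coe (hc : IsDeformedCocycle β v φ) (ξ η ζ : G) :
    (v (η * ξ) ζ : A) * star (v η (ξ * ζ) : A) = φ η ξ ζ • (star (v η ξ : A) * β η (v ξ ζ)) :=
  calc (v (η * ξ) ζ : A) * star (v η (ξ * ζ) : A)
      = star (v η ξ : A) * (v η ξ * v (η * ξ) ζ) * star (v η (ξ * ζ) : A) := by
        rw [← mul_assoc, Unitary.coe_star_mul_self, one_mul]
    _ = φ η ξ ζ • (star (v η ξ : A) * β η (v ξ ζ)) := by
        rw [hc, mul_smul_comm, smul_mul_assoc, mul_assoc, mul_assoc,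
          Unitary.mul_star_self_of_mem (v _ _).2, mul_one]

theorem twistCommutator_mul_right [StarModule ℂ A] (hc : IsDeformedCocycle β v φ) {ξ η ζ : G}
    (hξη : Commute ξ η) (hξζ : Commute ξ ζ) (hηζ : v η ζ = 1) (hφ : φ ξ η ζ ≠ 0) :
    twistCommutator v ξ (η * ζ) = ((φ ξ η ζ)⁻¹ * star (φ η ζ ξ) * φ η ξ ζ) •
      (twistCommutator v ξ η * β η (twistCommutator v ξ ζ)) := by
  have hleft : (v ξ (η * ζ) : A) = (φ ξ η ζ)⁻¹ • (v ξ η * v (ξ * η) ζ) := by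
    rw [hc, hηζ, OneMemClass.coe_one, map_one, one_mul, inv_smul_smul₀ hφ]
  have hright : (v (η * ζ) ξ : A) = φ η ζ ξ • (β η (v ζ ξ) * v η (ξ * ζ)) := by
    have h := hc η ζ ξ
    rwa [hηζ, OneMemClass.coe_one, one_mul, ← hξζ.eq] at h
  have hmiddle := hc.coe_mul_star_coe ξ η ζ
  rw [← hξη.eq] at hmiddle
  calc twistCommutator v ξ (η * ζ)
      = ((φ ξ η ζ)⁻¹ * star (φ η ζ ξ)) • (v ξ η * (v (ξ * η) ζ * star (v η (ξ * ζ) : A))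
          * β η (star (v ζ ξ : A))) := by
        rw [twistCommutator, hleft, hright, star_smul, star_mul, smul_mul_smul_comm, map_star]
        simp only [mul_assoc]
    _ = _ := by
        rw [hmiddle, twistCommutator, twistCommutator, map_mul, map_star, mul_smul_comm,
          smul_mul_assoc, smul_smul]
        simp only [mul_assoc]

end IsDeformedCocycle

end

theorem vt_deformed_cocycle_in_second_argument_general
    {A : Type*} [NormedRing A] [StarRing A] [NormedAlgebra ℂ A] [StarModule ℂ A]
    {G₁ G₂ : Type*} [CommGroup G₁] [CommGroup G₂]
    (β : G₁ × G₂ → (A ≃⋆ₐ[ℂ] A)) (v : G₁ × G₂ → G₁ × G₂ → unitary A)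
    (φ : G₁ × G₂ → G₁ × G₂ → G₁ × G₂ → ℂ)
    (hφabs : ∀ ξ η ζ, ‖φ ξ η ζ‖ = 1)
    (hswap₁₂ : ∀ ξ η ζ, φ η ξ ζ = (φ ξ η ζ)⁻¹)
    (hswap₂₃ : ∀ ξ η ζ, φ ξ ζ η = (φ ξ η ζ)⁻¹)
    (hcoc : ∀ ξ η ζ, (v ξ η : A) * (v (ξ * η) ζ : A)
      = φ ξ η ζ • (β ξ ((v η ζ : A)) * (v ξ (η * ζ) : A)))
    (hv₁ : ∀ x y : G₁, v (x, 1) (y, 1) = 1)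
    (vt : G₁ × G₂ → G₁ × G₂ → A)
    (hvt : ∀ ξ η, vt ξ η = (v ξ η : A) * star ((v η ξ : A))) :
    ∀ (X : G₂) (y z : G₁),
      vt ((1 : G₁), X) (y * z, 1)
        = (φ ((1 : G₁), X) (y, 1) (z, 1)) ^ (-3 : ℤ) •
            (vt ((1 : G₁), X) (y, 1) * β (y, 1) (vt ((1 : G₁), X) (z, 1))) := by
  intro X y z
  obtain rfl : vt = twistCommutator v := funext₂ hvt
  have hc : ‖φ (1, X) (y, 1) (z, 1)‖ = 1 := hφabs _ _ _
  have hscalar : (φ (1, X) (y, 1) (z, 1))⁻¹ * star (φ (y, 1) (z, 1) (1, X))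
      * φ (y, 1) (1, X) (z, 1) = φ (1, X) (y, 1) (z, 1) ^ (-3 : ℤ) := by
    rw [hswap₂₃ (y, 1) (1, X), hswap₁₂ (1, X), inv_inv, Complex.star_def,
      ← Complex.inv_eq_conj hc, zpow_neg, zpow_ofNat]
    ring
  have hφ : φ (1, X) (y, 1) (z, 1) ≠ 0 := norm_ne_zero_iff.mp (hc ▸ one_ne_zero)
  have hyz : ((y * z, 1) : G₁ × G₂) = (y, 1) * (z, 1) := by simp
  rw [hyz, IsDeformedCocycle.twistCommutator_mul_right hcoc (Commute.all _ _) (Commute.all _ _)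
    (hv₁ y z) hφ, hscalar]

/-- **setting of Theorem 8.1.**  With `(β, v, φ, ṽ)` as in Theorem 8.1, for
all `X ∈ G₂` and `y, z ∈ G₁`:
`ṽ(X, yz) = φ(X,y,z)⁻³ • (ṽ(X,y) * β_y(ṽ(X,z)))`. -/
theorem vt_deformed_cocycle_in_second_argument
    {A : Type*} [NormedRing A] [StarRing A] [CStarRing A] [NormedAlgebra ℂ A]
    [CompleteSpace A] [StarModule ℂ A]
    {G₁ G₂ : Type*} [CommGroup G₁] [CommGroup G₂]
    (β : G₁ × G₂ → (A ≃⋆ₐ[ℂ] A)) (v : G₁ × G₂ → G₁ × G₂ → unitary A)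
    (htw : ∀ ξ η (a : A), β ξ (β η a) = (v ξ η : A) * β (ξ * η) a * star ((v ξ η : A)))
    (φ : G₁ × G₂ → G₁ × G₂ → G₁ × G₂ → ℂ)
    (hφabs : ∀ ξ η ζ, ‖φ ξ η ζ‖ = 1)
    (hmul₁ : ∀ ξ ξ' η ζ, φ (ξ * ξ') η ζ = φ ξ η ζ * φ ξ' η ζ)
    (hmul₂ : ∀ ξ η η' ζ, φ ξ (η * η') ζ = φ ξ η ζ * φ ξ η' ζ)
    (hmul₃ : ∀ ξ η ζ ζ', φ ξ η (ζ * ζ') = φ ξ η ζ * φ ξ η ζ')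
    (hswap₁₂ : ∀ ξ η ζ, φ η ξ ζ = (φ ξ η ζ)⁻¹)
    (hswap₂₃ : ∀ ξ η ζ, φ ξ ζ η = (φ ξ η ζ)⁻¹)
    (hcoc : ∀ ξ η ζ, (v ξ η : A) * (v (ξ * η) ζ : A)
      = φ ξ η ζ • (β ξ ((v η ζ : A)) * (v ξ (η * ζ) : A)))
    (hv₁ : ∀ x y : G₁, v (x, 1) (y, 1) = 1)
    (hv₂ : ∀ X Y : G₂, v ((1 : G₁), X) (1, Y) = 1)
    (hφG₁ : ∀ x y z : G₁, φ (x, 1) (y, 1) (z, 1) = 1)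
    (hφG₂ : ∀ (ξ : G₁ × G₂) (X Y : G₂),
      φ ξ ((1 : G₁), X) (1, Y) = 1 ∧ φ ((1 : G₁), X) ξ (1, Y) = 1 ∧
        φ ((1 : G₁), X) ((1 : G₁), Y) ξ = 1)
    (vt : G₁ × G₂ → G₁ × G₂ → A)
    (hvt : ∀ ξ η, vt ξ η = (v ξ η : A) * star ((v η ξ : A))) :
    ∀ (X : G₂) (y z : G₁),
      vt ((1 : G₁), X) (y * z, 1)
        = (φ ((1 : G₁), X) (y, 1) (z, 1)) ^ (-3 : ℤ) •
            (vt ((1 : G₁), X) (y, 1) * β (y, 1) (vt ((1 : G₁), X) (z, 1))) :=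
  vt_deformed_cocycle_in_second_argument_general β v φ hφabs hswap₁₂ hswap₂₃ hcoc hv₁ vt hvt
end

section
/- Define v̂((x,X),(y,Y)) := β_x( ṽ(X,y) ). Then for all x, y, z ∈ G₁ and X, Y, Z ∈ G₂: v̂(xX, yY) * v̂(xyXY, zZ) * ( v̂(xX, yzYZ) )⁻¹ = φ(X,y,z)³ • β_x( β_X( v̂(yY, zZ) ) ). Thus v̂ satisfies a deformed cocycle condition whose obstruction is the three-cocycle varφ(xX, yY, zZ) = φ(X,y,z)³, whose antisymmetrisation is the original cocycle φ. -/
/-!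
Since `v` is trivial on `G₁`, the maps `β_x` form an honest action of `G₁`, so `β_x` factors out
of both sides and only the case `x = 1` remains. Three instances of the deformed cocycle identity
give `ṽ(XY, z) = β_X(ṽ(Y, z)) ṽ(X, z)` (every `φ` that occurs has two arguments in `G₂`), and three
more give `β_y(ṽ(X, z)) ṽ(X, yz)* = φ(X,y,z) φ(y,z,X) φ(y,X,z)⁻¹ ṽ(X, y)*`, which is
`φ(X,y,z)³ ṽ(X, y)*` by antisymmetry. Finally, `G` being abelian, `β_X β_y = Ad ṽ(X, y) ∘ β_y β_X`,
and this conjugation turns the left-hand side into the right-hand side.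
-/

section Unitary

variable {R : Type*} [Monoid R] [StarMul R] {u : R}

theorem star_mul_cancel_left_of_mem_unitary (hu : u ∈ unitary R) (a : R) :
    star u * (u * a) = a := by
  rw [← mul_assoc, Unitary.star_mul_self_of_mem hu, one_mul]

theorem mul_star_cancel_left_of_mem_unitary (hu : u ∈ unitary R) (a : R) :
    u * (star u * a) = a := by
  rw [← mul_assoc, Unitary.mul_star_self_of_mem hu, one_mul]

end Unitary

section Scalar

variable {A : Type*} [Ring A] [StarRing A] [Algebra ℂ A]

theorem star_eq_smul_of_mul_eq_smul [StarModule ℂ A] {c : ℂ} (hc : ‖c‖ = 1) {a b p : A}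
    (h : a * b = c • p) :
    star p = c • (star b * star a) := by
  have hc₀ : c ≠ 0 := ne_zero_of_norm_ne_zero (by simp [hc])
  rw [← star_mul, h, star_smul, smul_smul, Complex.star_def, ← Complex.inv_eq_conj hc,
    mul_inv_cancel₀ hc₀, one_smul]

theorem mul_star_eq_smul_of_mul_eq_smul {c : ℂ} (hc : ‖c‖ = 1) {a b p q : A}
    (hb : b ∈ unitary A) (hp : p ∈ unitary A) (h : a * b = c • (p * q)) :
    q * star b = c⁻¹ • (star p * a) := by
  calc q * star b = c⁻¹ • (star p * (c • (p * q)) * star b) := by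
        rw [mul_smul_comm, smul_mul_assoc, smul_smul,
          inv_mul_cancel₀ (ne_zero_of_norm_ne_zero (by simp [hc])), one_smul,
          star_mul_cancel_left_of_mem_unitary hp]
    _ = c⁻¹ • (star p * a) := by
        rw [← h, mul_assoc, mul_assoc, Unitary.mul_star_self_of_mem hb, mul_one]

end Scalar

namespace TwistedAction

variable {A : Type*} [Ring A] [StarRing A] [Algebra ℂ A] {G : Type*}

def antisymm (v : G → G → unitary A) (ξ η : G) : A :=
  v ξ η * star (v η ξ : A)

variable [CommGroup G] {β : G → A ≃⋆ₐ[ℂ] A} {v : G → G → unitary A}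

theorem map_map_eq_antisymm_conj
    (htw : ∀ ξ η a, β ξ (β η a) = (v ξ η : A) * β (ξ * η) a * star (v ξ η : A))
    (ξ η : G) (a : A) :
    β ξ (β η a) = antisymm v ξ η * β η (β ξ a) * star (antisymm v ξ η) := by
  rw [htw, htw, mul_comm η ξ, antisymm, star_mul, star_star]
  simp only [mul_assoc, star_mul_cancel_left_of_mem_unitary (v η ξ).2]

variable [StarModule ℂ A] {φ : G → G → G → ℂ}

theorem antisymm_mul_left
    (hcoc : ∀ ξ η ζ, (v ξ η : A) * v (ξ * η) ζ = φ ξ η ζ • (β ξ (v η ζ) * v ξ (η * ζ)))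
    (hφ : ∀ ξ η ζ, ‖φ ξ η ζ‖ = 1) {a b : G} (hab : v a b = 1) (c : G) :
    antisymm v (a * b) c =
      (φ a b c * φ c a b * (φ a c b)⁻¹) • (β a (antisymm v b c) * antisymm v a c) := by
  have h₁ : (v (a * b) c : A) = φ a b c • (β a (v b c) * v a (b * c)) := by
    simpa [hab] using hcoc a b c
  have h₂ : star (v c (a * b) : A) = φ c a b • (star (v (a * c) b : A) * star (v c a : A)) :=
    star_eq_smul_of_mul_eq_smul (hφ c a b) (by simpa [hab, mul_comm c a] using hcoc c a b)
  have h₃ : (v a (b * c) : A) * star (v (a * c) b : A) =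
      (φ a c b)⁻¹ • (star (β a (v c b)) * v a c) :=
    mul_star_eq_smul_of_mul_eq_smul (hφ a c b) (v _ _).2 (Unitary.map_mem (β a) (v c b).2)
      (by rw [mul_comm b c]; exact hcoc a c b)
  rw [antisymm, h₁, h₂, smul_mul_smul, mul_assoc, ← mul_assoc (v a (b * c) : A), h₃]
  simp only [antisymm, map_mul, map_star, smul_mul_assoc, mul_smul_comm, smul_smul, mul_assoc]

theorem map_antisymm_mul_star_antisymm
    (hcoc : ∀ ξ η ζ, (v ξ η : A) * v (ξ * η) ζ = φ ξ η ζ • (β ξ (v η ζ) * v ξ (η * ζ)))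
    (hφ : ∀ ξ η ζ, ‖φ ξ η ζ‖ = 1) {b c : G} (hbc : v b c = 1) (a : G) :
    β b (antisymm v a c) * star (antisymm v a (b * c)) =
      (φ a b c * φ b c a * (φ b a c)⁻¹) • star (antisymm v a b) := by
  have h₁ : star (v a (b * c) : A) = φ a b c • (star (v (a * b) c : A) * star (v a b : A)) :=
    star_eq_smul_of_mul_eq_smul (hφ a b c) (by simpa [hbc] using hcoc a b c)
  have h₂ : (v (b * c) a : A) = φ b c a • (β b (v c a) * v b (c * a)) := by
    simpa [hbc] using hcoc b c a
  have h₃ : β b (v a c : A) * v b (a * c) = (φ b a c)⁻¹ • ((v b a : A) * v (b * a) c) := by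
    rw [hcoc, smul_smul, inv_mul_cancel₀ (ne_zero_of_norm_ne_zero (by simp [hφ])), one_smul]
  rw [antisymm, antisymm, star_mul, star_star, h₂, map_mul, map_star, h₁]
  simp only [smul_mul_assoc, mul_smul_comm, smul_smul, mul_assoc,
    star_mul_cancel_left_of_mem_unitary (Unitary.map_mem (β b) (v c a).2)]
  rw [mul_comm c a, ← mul_assoc (β b (v a c) : A), h₃, mul_comm b a]
  simp only [antisymm, star_mul, star_star, smul_mul_assoc, smul_smul, mul_assoc,
    mul_star_cancel_left_of_mem_unitary (v (a * b) c).2]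

theorem antisymm_mul_map_antisymm_mul_star_antisymm
    (htw : ∀ ξ η a, β ξ (β η a) = (v ξ η : A) * β (ξ * η) a * star (v ξ η : A))
    (hcoc : ∀ ξ η ζ, (v ξ η : A) * v (ξ * η) ζ = φ ξ η ζ • (β ξ (v η ζ) * v ξ (η * ζ)))
    (hφ : ∀ ξ η ζ, ‖φ ξ η ζ‖ = 1) {a a' b c : G} (haa' : v a a' = 1) (hbc : v b c = 1) :
    antisymm v a b * β b (antisymm v (a * a') c) * star (antisymm v a (b * c)) =
      ((φ a a' c * φ c a a' * (φ a c a')⁻¹) * (φ a b c * φ b c a * (φ b a c)⁻¹)) •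
        β a (β b (antisymm v a' c)) := by
  calc antisymm v a b * β b (antisymm v (a * a') c) * star (antisymm v a (b * c))
      = (φ a a' c * φ c a a' * (φ a c a')⁻¹) • (antisymm v a b * β b (β a (antisymm v a' c)) *
          (β b (antisymm v a c) * star (antisymm v a (b * c)))) := by
        rw [antisymm_mul_left hcoc hφ haa', map_smul, map_mul]
        simp only [mul_smul_comm, smul_mul_assoc, mul_assoc]
    _ = ((φ a a' c * φ c a a' * (φ a c a')⁻¹) * (φ a b c * φ b c a * (φ b a c)⁻¹)) •
          (antisymm v a b * β b (β a (antisymm v a' c)) * star (antisymm v a b)) := by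
        rw [map_antisymm_mul_star_antisymm hcoc hφ hbc, mul_smul_comm, smul_smul]
    _ = _ := by rw [map_map_eq_antisymm_conj htw a b]

end TwistedAction

theorem vhat_deformed_cocycle_general
    {A : Type*} [NormedRing A] [StarRing A] [NormedAlgebra ℂ A] [StarModule ℂ A]
    {G₁ G₂ : Type*} [CommGroup G₁] [CommGroup G₂]
    (β : G₁ × G₂ → (A ≃⋆ₐ[ℂ] A)) (v : G₁ × G₂ → G₁ × G₂ → unitary A)
    (htw : ∀ ξ η (a : A), β ξ (β η a) = (v ξ η : A) * β (ξ * η) a * star ((v ξ η : A)))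
    (φ : G₁ × G₂ → G₁ × G₂ → G₁ × G₂ → ℂ)
    (hφabs : ∀ ξ η ζ, ‖φ ξ η ζ‖ = 1)
    (hswap₁₂ : ∀ ξ η ζ, φ η ξ ζ = (φ ξ η ζ)⁻¹)
    (hswap₂₃ : ∀ ξ η ζ, φ ξ ζ η = (φ ξ η ζ)⁻¹)
    (hcoc : ∀ ξ η ζ, (v ξ η : A) * (v (ξ * η) ζ : A)
      = φ ξ η ζ • (β ξ ((v η ζ : A)) * (v ξ (η * ζ) : A)))
    (hv₁ : ∀ x y : G₁, v (x, 1) (y, 1) = 1)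
    (hv₂ : ∀ X Y : G₂, v ((1 : G₁), X) (1, Y) = 1)
    (hφG₂ : ∀ (ξ : G₁ × G₂) (X Y : G₂),
      φ ξ ((1 : G₁), X) (1, Y) = 1 ∧ φ ((1 : G₁), X) ξ (1, Y) = 1 ∧
        φ ((1 : G₁), X) ((1 : G₁), Y) ξ = 1)
    (vt : G₁ × G₂ → G₁ × G₂ → A)
    (hvt : ∀ ξ η, vt ξ η = (v ξ η : A) * star ((v η ξ : A)))
    (vh : G₁ × G₂ → G₁ × G₂ → A)
    (hvh : ∀ ξ η, vh ξ η = β (ξ.1, 1) (vt ((1 : G₁), ξ.2) (η.1, 1))) :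
    ∀ (x y z : G₁) (X Y Z : G₂),
      vh (x, X) (y, Y) * vh (x * y, X * Y) (z, Z) * star (vh (x, X) (y * z, Y * Z))
        = (φ ((1 : G₁), X) (y, 1) (z, 1)) ^ (3 : ℕ) •
            β (x, 1) (β ((1 : G₁), X) (vh (y, Y) (z, Z))) := by
  intro x y z X Y Z
  obtain rfl : vt = TwistedAction.antisymm v := funext fun ξ ↦ funext (hvt ξ)
  have hβ₁ : ∀ a, β (x, 1) (β (y, 1) a) = β (x * y, 1) a := fun a ↦ by
    simp [htw, hv₁]
  obtain ⟨hφ₁, hφ₂, hφ₃⟩ := hφG₂ (z, 1) X Y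
  have hφcube : φ (1, X) (y, 1) (z, 1) * φ (y, 1) (z, 1) (1, X) * (φ (y, 1) (1, X) (z, 1))⁻¹ =
      φ (1, X) (y, 1) (z, 1) ^ 3 := by
    rw [hswap₂₃ (y, 1), hswap₁₂ (1, X), inv_inv]
    ring
  have hcore := TwistedAction.antisymm_mul_map_antisymm_mul_star_antisymm htw hcoc hφabs
    (a' := (1, Y)) (hv₂ X Y) (hv₁ y z)
  rw [hφ₁, hφ₂, hφ₃, hφcube] at hcore
  simp only [Prod.mk_mul_mk, one_mul, mul_one, inv_one] at hcore
  simp only [hvh]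
  rw [← hβ₁, ← map_star, ← map_mul, ← map_mul, hcore, map_smul]

/-- **setting of Theorem 8.1.**  With `(β, v, φ, ṽ)` as in Theorem 8.1,
define `v̂((x,X),(y,Y)) := β_x(ṽ(X,y))`.  Then
`v̂(xX,yY) * v̂(xyXY,zZ) * (v̂(xX,yzYZ))⁻¹ = φ(X,y,z)³ • β_x(β_X(v̂(yY,zZ)))`
(the inverse of the unitary `v̂(xX,yzYZ)` being its adjoint): `v̂` satisfies a deformed
cocycle condition with obstruction three-cocycle `varφ(xX,yY,zZ) = φ(X,y,z)³`. -/
theorem vhat_deformed_cocycle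
    {A : Type*} [NormedRing A] [StarRing A] [CStarRing A] [NormedAlgebra ℂ A]
    [CompleteSpace A] [StarModule ℂ A]
    {G₁ G₂ : Type*} [CommGroup G₁] [CommGroup G₂]
    (β : G₁ × G₂ → (A ≃⋆ₐ[ℂ] A)) (v : G₁ × G₂ → G₁ × G₂ → unitary A)
    (htw : ∀ ξ η (a : A), β ξ (β η a) = (v ξ η : A) * β (ξ * η) a * star ((v ξ η : A)))
    (φ : G₁ × G₂ → G₁ × G₂ → G₁ × G₂ → ℂ)
    (hφabs : ∀ ξ η ζ, ‖φ ξ η ζ‖ = 1)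
    (hmul₁ : ∀ ξ ξ' η ζ, φ (ξ * ξ') η ζ = φ ξ η ζ * φ ξ' η ζ)
    (hmul₂ : ∀ ξ η η' ζ, φ ξ (η * η') ζ = φ ξ η ζ * φ ξ η' ζ)
    (hmul₃ : ∀ ξ η ζ ζ', φ ξ η (ζ * ζ') = φ ξ η ζ * φ ξ η ζ')
    (hswap₁₂ : ∀ ξ η ζ, φ η ξ ζ = (φ ξ η ζ)⁻¹)
    (hswap₂₃ : ∀ ξ η ζ, φ ξ ζ η = (φ ξ η ζ)⁻¹)
    (hcoc : ∀ ξ η ζ, (v ξ η : A) * (v (ξ * η) ζ : A)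
      = φ ξ η ζ • (β ξ ((v η ζ : A)) * (v ξ (η * ζ) : A)))
    (hv₁ : ∀ x y : G₁, v (x, 1) (y, 1) = 1)
    (hv₂ : ∀ X Y : G₂, v ((1 : G₁), X) (1, Y) = 1)
    (hφG₁ : ∀ x y z : G₁, φ (x, 1) (y, 1) (z, 1) = 1)
    (hφG₂ : ∀ (ξ : G₁ × G₂) (X Y : G₂),
      φ ξ ((1 : G₁), X) (1, Y) = 1 ∧ φ ((1 : G₁), X) ξ (1, Y) = 1 ∧
        φ ((1 : G₁), X) ((1 : G₁), Y) ξ = 1)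
    (vt : G₁ × G₂ → G₁ × G₂ → A)
    (hvt : ∀ ξ η, vt ξ η = (v ξ η : A) * star ((v η ξ : A)))
    (vh : G₁ × G₂ → G₁ × G₂ → A)
    (hvh : ∀ ξ η, vh ξ η = β (ξ.1, 1) (vt ((1 : G₁), ξ.2) (η.1, 1))) :
    ∀ (x y z : G₁) (X Y Z : G₂),
      vh (x, X) (y, Y) * vh (x * y, X * Y) (z, Z) * star (vh (x, X) (y * z, Y * Z))
        = (φ ((1 : G₁), X) (y, 1) (z, 1)) ^ (3 : ℕ) •
            β (x, 1) (β ((1 : G₁), X) (vh (y, Y) (z, Z))) :=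
  vhat_deformed_cocycle_general β v htw φ hφabs hswap₁₂ hswap₂₃ hcoc hv₁ hv₂ hφG₂ vt hvt vh hvh
end

section
/- For X ∈ G₂ and h : G₁ → A define β̃_X[h](z) := β_X( h(z) ) * ṽ(X,z). Then X ↦ β̃_X is a group homomorphism: for all X, Y ∈ G₂ and all h : G₁ → A, β̃_X[ β̃_Y[h] ] = β̃_{XY}[h], i.e. pointwise β_X( β_Y(h(z)) * ṽ(Y,z) ) * ṽ(X,z) = β_{XY}( h(z) ) * ṽ(XY, z) for all z ∈ G₁. -/
/-!
Write `X` for `(1, X)` and `z` for `(z, 1)`. Since `v(X, Y) = 1`, the action composes strictly on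
`G₂`: `β_X ∘ β_Y = β_{XY}`. The remaining twist factor is rewritten with three instances of the
deformed cocycle identity, for `(X, Y, z)`, `(X, z, Y)` and `(z, X, Y)`, whose `φ`-factors are
all trivial because two arguments lie in `G₂`:
`β_X(ṽ(Y, z)) ṽ(X, z) = ṽ(XY, z)`.
-/

def twistedCommutator {A G : Type*} [Monoid A] [StarMul A] (v : G → G → unitary A)
    (ξ η : G) : A :=
  v ξ η * star (v η ξ : A)

section TwistedAction

variable {R A G : Type*} [CommSemiring R] [Semiring A] [StarRing A] [Algebra R A] [Monoid G]
  {β : G → A ≃⋆ₐ[R] A} {v : G → G → unitary A}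

theorem apply_apply_eq_of_cocycle_eq_one
    (htw : ∀ ξ η (a : A), β ξ (β η a) = (v ξ η : A) * β (ξ * η) a * star ((v ξ η : A)))
    {ξ η : G} (hv : v ξ η = 1) (a : A) :
    β ξ (β η a) = β (ξ * η) a := by
  simp [htw, hv]

variable {φ : G → G → G → R}
  (hcoc : ∀ ξ η ζ, (v ξ η : A) * (v (ξ * η) ζ : A)
    = φ ξ η ζ • (β ξ ((v η ζ : A)) * (v ξ (η * ζ) : A)))
include hcoc

theorem map_twistedCommutator_mul_twistedCommutator {ξ η ζ : G}
    (hξζ : Commute ξ ζ) (hηζ : Commute η ζ) (hv : v ξ η = 1)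
    (hφ₁ : φ ξ η ζ = 1) (hφ₂ : φ ξ ζ η = 1) (hφ₃ : φ ζ ξ η = 1) :
    β ξ (twistedCommutator v η ζ) * twistedCommutator v ξ ζ
      = twistedCommutator v (ξ * η) ζ := by
  have c₁ : (v (ξ * η) ζ : A) = β ξ (v η ζ) * v ξ (η * ζ) := by
    simpa [hv, hφ₁] using hcoc ξ η ζ
  have c₂ : β ξ (v ζ η) = (v ξ ζ : A) * v (ζ * ξ) η * star (v ξ (η * ζ) : A) := by
    rw [← hξζ.eq, hcoc, hφ₂, one_smul, ← hηζ.eq, mul_assoc,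
      Unitary.mul_star_self_of_mem (v _ _).2, mul_one]
  have c₃ : (v ζ ξ : A) * v (ζ * ξ) η = v ζ (ξ * η) := by
    simpa [hv, hφ₃] using hcoc ζ ξ η
  calc β ξ (twistedCommutator v η ζ) * twistedCommutator v ξ ζ
      = β ξ (v η ζ) * v ξ (η * ζ) * star (v (ζ * ξ) η : A) * (star (v ξ ζ : A) * v ξ ζ)
          * star (v ζ ξ : A) := by
        simp only [twistedCommutator, map_mul, map_star, c₂, star_mul, star_star, mul_assoc]
    _ = v (ξ * η) ζ * star ((v ζ ξ : A) * v (ζ * ξ) η) := by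
        rw [Unitary.star_mul_self_of_mem (v ξ ζ).2, mul_one, c₁, star_mul, mul_assoc]
    _ = twistedCommutator v (ξ * η) ζ := by rw [c₃, twistedCommutator]

theorem map_mul_twistedCommutator_mul_twistedCommutator
    (htw : ∀ ξ η (a : A), β ξ (β η a) = (v ξ η : A) * β (ξ * η) a * star ((v ξ η : A)))
    {ξ η ζ : G} (hξζ : Commute ξ ζ) (hηζ : Commute η ζ) (hv : v ξ η = 1)
    (hφ₁ : φ ξ η ζ = 1) (hφ₂ : φ ξ ζ η = 1) (hφ₃ : φ ζ ξ η = 1) (a : A) :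
    β ξ (β η a * twistedCommutator v η ζ) * twistedCommutator v ξ ζ
      = β (ξ * η) a * twistedCommutator v (ξ * η) ζ := by
  rw [map_mul, mul_assoc,
    map_twistedCommutator_mul_twistedCommutator hcoc hξζ hηζ hv hφ₁ hφ₂ hφ₃,
    apply_apply_eq_of_cocycle_eq_one htw hv]

end TwistedAction

theorem beta_tilde_group_homomorphism_general
    {A : Type*} [NormedRing A] [StarRing A] [NormedAlgebra ℂ A]
    {G₁ G₂ : Type*} [CommGroup G₁] [CommGroup G₂]
    (β : G₁ × G₂ → (A ≃⋆ₐ[ℂ] A)) (v : G₁ × G₂ → G₁ × G₂ → unitary A)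
    (htw : ∀ ξ η (a : A), β ξ (β η a) = (v ξ η : A) * β (ξ * η) a * star ((v ξ η : A)))
    (φ : G₁ × G₂ → G₁ × G₂ → G₁ × G₂ → ℂ)
    (hcoc : ∀ ξ η ζ, (v ξ η : A) * (v (ξ * η) ζ : A)
      = φ ξ η ζ • (β ξ ((v η ζ : A)) * (v ξ (η * ζ) : A)))
    (hv₂ : ∀ X Y : G₂, v ((1 : G₁), X) (1, Y) = 1)
    (hφG₂ : ∀ (ξ : G₁ × G₂) (X Y : G₂),
      φ ξ ((1 : G₁), X) (1, Y) = 1 ∧ φ ((1 : G₁), X) ξ (1, Y) = 1 ∧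
        φ ((1 : G₁), X) ((1 : G₁), Y) ξ = 1)
    (vt : G₁ × G₂ → G₁ × G₂ → A)
    (hvt : ∀ ξ η, vt ξ η = (v ξ η : A) * star ((v η ξ : A))) :
    ∀ (X Y : G₂) (h : G₁ → A) (z : G₁),
      β ((1 : G₁), X) (β ((1 : G₁), Y) (h z) * vt ((1 : G₁), Y) (z, 1))
          * vt ((1 : G₁), X) (z, 1)
        = β ((1 : G₁), X * Y) (h z) * vt ((1 : G₁), X * Y) (z, 1) := by
  obtain rfl : vt = twistedCommutator v := funext₂ hvt
  intro X Y h z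
  obtain ⟨hφ₃, hφ₂, hφ₁⟩ := hφG₂ (z, 1) X Y
  simpa only [Prod.mk_mul_mk, one_mul] using
    map_mul_twistedCommutator_mul_twistedCommutator hcoc htw (Commute.all _ _) (Commute.all _ _)
      (hv₂ X Y) hφ₁ hφ₂ hφ₃ (h z)

/-- **setting of Theorem 8.1.**  With `(β, v, φ, ṽ)` as in Theorem 8.1,
define `β̃_X[h](z) := β_X(h(z)) * ṽ(X,z)` for `X ∈ G₂` and `h : G₁ → A`.  Then
`X ↦ β̃_X` is a group homomorphism: `β̃_X[β̃_Y[h]] = β̃_{XY}[h]`, i.e. pointwise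
`β_X(β_Y(h(z)) * ṽ(Y,z)) * ṽ(X,z) = β_{XY}(h(z)) * ṽ(XY,z)`. -/
theorem beta_tilde_group_homomorphism
    {A : Type*} [NormedRing A] [StarRing A] [CStarRing A] [NormedAlgebra ℂ A]
    [CompleteSpace A] [StarModule ℂ A]
    {G₁ G₂ : Type*} [CommGroup G₁] [CommGroup G₂]
    (β : G₁ × G₂ → (A ≃⋆ₐ[ℂ] A)) (v : G₁ × G₂ → G₁ × G₂ → unitary A)
    (htw : ∀ ξ η (a : A), β ξ (β η a) = (v ξ η : A) * β (ξ * η) a * star ((v ξ η : A)))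
    (φ : G₁ × G₂ → G₁ × G₂ → G₁ × G₂ → ℂ)
    (hφabs : ∀ ξ η ζ, ‖φ ξ η ζ‖ = 1)
    (hmul₁ : ∀ ξ ξ' η ζ, φ (ξ * ξ') η ζ = φ ξ η ζ * φ ξ' η ζ)
    (hmul₂ : ∀ ξ η η' ζ, φ ξ (η * η') ζ = φ ξ η ζ * φ ξ η' ζ)
    (hmul₃ : ∀ ξ η ζ ζ', φ ξ η (ζ * ζ') = φ ξ η ζ * φ ξ η ζ')
    (hswap₁₂ : ∀ ξ η ζ, φ η ξ ζ = (φ ξ η ζ)⁻¹)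
    (hswap₂₃ : ∀ ξ η ζ, φ ξ ζ η = (φ ξ η ζ)⁻¹)
    (hcoc : ∀ ξ η ζ, (v ξ η : A) * (v (ξ * η) ζ : A)
      = φ ξ η ζ • (β ξ ((v η ζ : A)) * (v ξ (η * ζ) : A)))
    (hv₁ : ∀ x y : G₁, v (x, 1) (y, 1) = 1)
    (hv₂ : ∀ X Y : G₂, v ((1 : G₁), X) (1, Y) = 1)
    (hφG₁ : ∀ x y z : G₁, φ (x, 1) (y, 1) (z, 1) = 1)
    (hφG₂ : ∀ (ξ : G₁ × G₂) (X Y : G₂),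
      φ ξ ((1 : G₁), X) (1, Y) = 1 ∧ φ ((1 : G₁), X) ξ (1, Y) = 1 ∧
        φ ((1 : G₁), X) ((1 : G₁), Y) ξ = 1)
    (vt : G₁ × G₂ → G₁ × G₂ → A)
    (hvt : ∀ ξ η, vt ξ η = (v ξ η : A) * star ((v η ξ : A))) :
    ∀ (X Y : G₂) (h : G₁ → A) (z : G₁),
      β ((1 : G₁), X) (β ((1 : G₁), Y) (h z) * vt ((1 : G₁), Y) (z, 1))
          * vt ((1 : G₁), X) (z, 1)
        = β ((1 : G₁), X * Y) (h z) * vt ((1 : G₁), X * Y) (z, 1) :=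
  beta_tilde_group_homomorphism_general β v htw φ hcoc hv₂ hφG₂ vt hvt
end

section
/- For functions k : G × G × G → ℂ define the twisted product (k₁ * k₂)(u,w;t) := ∫_G k₁(u,v; v w⁻¹ t) · k₂(v,w; t) · φ(u v⁻¹, v w⁻¹, t)⁻¹ · φ(u v⁻¹, v w⁻¹, w) dμ(v), and define the strictification map k ↦ k^F by k^F(u,w;x) := k(u,w; w x) · φ(u w⁻¹, w, x)⁻¹. Then whenever the integrals converge absolutely, (k₁ * k₂)^F(u,w;x) = ∫_G k₁^F(u,v;x) · k₂^F(v,w;x) dμ(v) for all u, w, x ∈ G; that is, the strictified product agrees with the ordinary associative product of kernel-valued functions on G, so the strictification of the twisted compact operators is isomorphic to C(G, K(L²(G))). -/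
open MeasureTheory

/-! The strictified product and the ordinary product have the same integrand pointwise:
the pentagonal identity at `(u v⁻¹, v w⁻¹, w, x)` turns the twisting factors
`φ(uv⁻¹, vw⁻¹, wx)⁻¹ φ(uv⁻¹, vw⁻¹, w) φ(uw⁻¹, w, x)⁻¹` into `φ(uv⁻¹, v, x)⁻¹ φ(vw⁻¹, w, x)⁻¹`. -/

theorem inv_mul_mul_inv_eq_inv_mul_inv_of_pentagon {G K : Type*} [Mul G] [Field K]
    {φ : G → G → G → K} (hφ₀ : ∀ a b c, φ a b c ≠ 0)
    (hpent : ∀ x y z w, φ x y z * φ x (y * z) w * φ y z w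
      = φ (x * y) z w * φ x y (z * w)) (a b c x : G) :
    (φ a b (c * x))⁻¹ * φ a b c * (φ (a * b) c x)⁻¹
      = (φ a (b * c) x)⁻¹ * (φ b c x)⁻¹ := by
  have := hφ₀ a b (c * x)
  have := hφ₀ (a * b) c x
  have := hφ₀ a (b * c) x
  have := hφ₀ b c x
  field_simp
  linear_combination hpent a b c x

theorem strictification_of_twisted_kernels_general
    {G : Type*} [Group G] [MeasurableSpace G]
    (μ : Measure G)
    (φ : G → G → G → ℂ) (hφ : ∀ x y z, ‖φ x y z‖ = 1)
    (hpent : ∀ x y z w, φ x y z * φ x (y * z) w * φ y z w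
      = φ (x * y) z w * φ x y (z * w))
    (k₁ k₂ : G → G → G → ℂ) (u w x : G) :
    (∫ v, k₁ u v (v * w⁻¹ * (w * x)) * k₂ v w (w * x) *
          (φ (u * v⁻¹) (v * w⁻¹) (w * x))⁻¹ * φ (u * v⁻¹) (v * w⁻¹) w ∂μ)
        * (φ (u * w⁻¹) w x)⁻¹
      = ∫ v, (k₁ u v (v * x) * (φ (u * v⁻¹) v x)⁻¹) *
          (k₂ v w (w * x) * (φ (v * w⁻¹) w x)⁻¹) ∂μ := by
  have hφ₀ : ∀ a b c, φ a b c ≠ 0 := fun a b c ↦ ne_zero_of_norm_ne_zero (by simp [hφ])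
  rw [← integral_mul_const]
  congr 1 with v
  have hfactor := inv_mul_mul_inv_eq_inv_mul_inv_of_pentagon hφ₀ hpent (u * v⁻¹) (v * w⁻¹) w x
  simp only [mul_assoc, inv_mul_cancel_left, inv_mul_cancel, mul_one] at hfactor ⊢
  linear_combination k₁ u v (v * x) * k₂ v w (w * x) * hfactor

/-- **strictification of the twisted compact operators.**  Let `G` be a
locally compact group with left Haar measure `μ` and `φ` a unit-circle-valued function on
`G³` satisfying the pentagonal identity.  For `k : G × G × G → ℂ` define the twisted
product `(k₁ * k₂)(u,w;t) := ∫ k₁(u,v; vw⁻¹t) k₂(v,w;t) φ(uv⁻¹,vw⁻¹,t)⁻¹ φ(uv⁻¹,vw⁻¹,w) dμ(v)`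
and the strictification `k^F(u,w;x) := k(u,w;wx) φ(uw⁻¹,w,x)⁻¹`.  Then whenever the
integrals converge absolutely,
`(k₁ * k₂)^F(u,w;x) = ∫ k₁^F(u,v;x) k₂^F(v,w;x) dμ(v)`: the strictified product is the
ordinary associative product of kernel-valued functions, so the strictification of the
twisted compact operators is isomorphic to `C(G, K(L²(G)))`. -/
theorem strictification_of_twisted_kernels
    {G : Type*} [Group G] [TopologicalSpace G] [IsTopologicalGroup G]
    [LocallyCompactSpace G] [MeasurableSpace G] [BorelSpace G]
    (μ : Measure G) [μ.IsHaarMeasure]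
    (φ : G → G → G → ℂ) (hφ : ∀ x y z, ‖φ x y z‖ = 1)
    (hpent : ∀ x y z w, φ x y z * φ x (y * z) w * φ y z w
      = φ (x * y) z w * φ x y (z * w))
    (k₁ k₂ : G → G → G → ℂ) (u w x : G)
    (hint : Integrable (fun v => k₁ u v (v * x) * k₂ v w (w * x)) μ) :
    (∫ v, k₁ u v (v * w⁻¹ * (w * x)) * k₂ v w (w * x) *
          (φ (u * v⁻¹) (v * w⁻¹) (w * x))⁻¹ * φ (u * v⁻¹) (v * w⁻¹) w ∂μ)
        * (φ (u * w⁻¹) w x)⁻¹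
      = ∫ v, (k₁ u v (v * x) * (φ (u * v⁻¹) v x)⁻¹) *
          (k₂ v w (w * x) * (φ (v * w⁻¹) w x)⁻¹) ∂μ :=
  strictification_of_twisted_kernels_general μ φ hφ hpent k₁ k₂ u w x
end

section
/- Identify G = (ℤ/2ℤ)³ ≅ {0,1}³ and for a, b, c ∈ G let [a,b,c] ∈ ℤ/2ℤ denote the determinant of the 3×3 matrix over ℤ/2ℤ with rows a, b, c (equivalently a·(b×c) computed mod 2). Define φ(a,b,c) := (−1)^{[a,b,c]} ∈ {±1} ⊂ ℂ (using the lift of [a,b,c] to {0,1}). Then φ satisfies the pentagonal cocycle identity on the group G: φ(a,b,c) · φ(a, b+c, d) · φ(b,c,d) = φ(a+b, c, d) · φ(a, b, c+d) for all a,b,c,d ∈ G. (This is the three-cocycle used to construct the octonions from ℝ.) -/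
/-- `[a,b,c]` : the determinant over `ℤ/2ℤ` of the `3×3` matrix with rows
`a, b, c ∈ (ℤ/2ℤ)³` (equivalently `a·(b×c)` mod 2). -/
def octTripleDet (a b c : Fin 3 → ZMod 2) : ZMod 2 :=
  Matrix.det (Matrix.of ![a, b, c])

/-- The octonion associator cocycle `φ(a,b,c) = (−1)^{[a,b,c]} ∈ {±1} ⊂ ℂ`, using the lift
of `[a,b,c]` to `{0,1}`. -/
noncomputable def octPhi (a b c : Fin 3 → ZMod 2) : ℂ :=
  (-1 : ℂ) ^ (octTripleDet a b c).val

/-!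
A function `φ` on `G × G × G` that is multiplicative in each argument is a pentagonal cocycle:
both sides of the identity expand to `φ(a,b,c) φ(a,b,d) φ(a,c,d) φ(b,c,d)`.
The octonion cocycle is of this kind, being the character `x ↦ (-1)^x` of `ℤ/2ℤ` composed with
the determinant, which is additive in each row.
-/

theorem pentagonal_cocycle_of_mul₃ {G M : Type*} [Add G] [CommMonoid M] (φ : G → G → G → M)
    (h₁ : ∀ a b c d, φ (a + b) c d = φ a c d * φ b c d)
    (h₂ : ∀ a b c d, φ a (b + c) d = φ a b d * φ a c d)
    (h₃ : ∀ a b c d, φ a b (c + d) = φ a b c * φ a b d) (a b c d : G) :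
    φ a b c * φ a (b + c) d * φ b c d = φ (a + b) c d * φ a b (c + d) := by
  rw [h₁, h₂, h₃]
  ac_rfl

theorem neg_one_pow_val_add {R : Type*} [Ring R] (x y : ZMod 2) :
    (-1 : R) ^ (x + y).val = (-1) ^ x.val * (-1) ^ y.val := by
  rw [ZMod.val_add, ← neg_one_pow_eq_pow_mod_two, pow_add]

section

variable (a b c d : Fin 3 → ZMod 2)

theorem octTripleDet_add_left :
    octTripleDet (a + b) c d = octTripleDet a c d + octTripleDet b c d := by
  have hrow (u) : (Matrix.of ![a, c, d]).updateRow 0 u = Matrix.of ![u, c, d] := by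
    ext i; fin_cases i <;> rfl
  simpa only [octTripleDet, hrow] using Matrix.det_updateRow_add (Matrix.of ![a, c, d]) 0 a b

theorem octTripleDet_add_mid :
    octTripleDet a (b + c) d = octTripleDet a b d + octTripleDet a c d := by
  have hrow (u) : (Matrix.of ![a, b, d]).updateRow 1 u = Matrix.of ![a, u, d] := by
    ext i; fin_cases i <;> rfl
  simpa only [octTripleDet, hrow] using Matrix.det_updateRow_add (Matrix.of ![a, b, d]) 1 b c

theorem octTripleDet_add_right :
    octTripleDet a b (c + d) = octTripleDet a b c + octTripleDet a b d := by
  have hrow (u) : (Matrix.of ![a, b, c]).updateRow 2 u = Matrix.of ![a, b, u] := by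
    ext i; fin_cases i <;> rfl
  simpa only [octTripleDet, hrow] using Matrix.det_updateRow_add (Matrix.of ![a, b, c]) 2 c d

theorem octPhi_add_left : octPhi (a + b) c d = octPhi a c d * octPhi b c d := by
  rw [octPhi, octTripleDet_add_left, neg_one_pow_val_add, octPhi, octPhi]

theorem octPhi_add_mid : octPhi a (b + c) d = octPhi a b d * octPhi a c d := by
  rw [octPhi, octTripleDet_add_mid, neg_one_pow_val_add, octPhi, octPhi]

theorem octPhi_add_right : octPhi a b (c + d) = octPhi a b c * octPhi a b d := by
  rw [octPhi, octTripleDet_add_right, neg_one_pow_val_add, octPhi, octPhi]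

end

/-- The three-cocycle used to construct the octonions from `ℝ`:
`φ(a,b,c) = (−1)^{[a,b,c]}` on `G = (ℤ/2ℤ)³` satisfies the pentagonal cocycle identity
`φ(a,b,c) φ(a,b+c,d) φ(b,c,d) = φ(a+b,c,d) φ(a,b,c+d)`. -/
theorem octonion_cocycle_pentagonal :
    ∀ a b c d : Fin 3 → ZMod 2,
      octPhi a b c * octPhi a (b + c) d * octPhi b c d
        = octPhi (a + b) c d * octPhi a b (c + d) :=
  pentagonal_cocycle_of_mul₃ octPhi octPhi_add_left octPhi_add_mid octPhi_add_right
end
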